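/- For every real λ ≥ 100 and every integer s ≥ 1, one has e^{−λ} · Σ_{i=⌊√s⌋}^{∞} λ^i / i! ≥ e^{−s}; equivalently, a Poisson random variable with mean λ is at least ⌊√s⌋ with probability at least e^{−s}. -/

import Mathlib

/-!
Statement 12: For every real λ ≥ 100 and every integer s ≥ 1, one has
e^{−λ} · Σ_{i=⌊√s⌋}^{∞} λ^i / i! ≥ e^{−s}; i.e. a Poisson random variable with mean λ
is at least ⌊√s⌋ with probability at least e^{−s}.
-/

/-- If `2 * k ≤ λ`, the head sum `∑_{i<k} λ^i/i!` is at most the single term `λ^k/k!`. -/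
lemma poisson_head_le_term (lambda : ℝ) :
    ∀ k : ℕ, 2 * (k : ℝ) ≤ lambda →
      ∑ i ∈ Finset.range k, lambda ^ i / (Nat.factorial i : ℝ) ≤
        lambda ^ k / (Nat.factorial k : ℝ) := by
  intro k
  induction k with
  | zero => simp
  | succ k ih =>
    intro h
    have hk : 2 * (k : ℝ) ≤ lambda := by push_cast at h ⊢; linarith
    have h0 : (0 : ℝ) ≤ lambda := le_trans (by positivity) h
    have hkf : (0 : ℝ) < (Nat.factorial k : ℝ) := by
      exact_mod_cast Nat.factorial_pos k
    have hfact : ((Nat.factorial (k + 1) : ℝ)) = ((k : ℝ) + 1) * (Nat.factorial k : ℝ) := by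
      push_cast [Nat.factorial_succ]; ring
    rw [Finset.sum_range_succ]
    have h2 : lambda ^ k / (Nat.factorial k : ℝ) + lambda ^ k / (Nat.factorial k : ℝ) ≤
        lambda ^ (k + 1) / (Nat.factorial (k + 1) : ℝ) := by
      rw [pow_succ, hfact, ← add_div, div_le_div_iff₀ hkf (by positivity)]
      have hp : (0 : ℝ) ≤ lambda ^ k := pow_nonneg h0 k
      have h' : 2 * ((k : ℝ) + 1) ≤ lambda := by push_cast at h; linarith
      nlinarith [mul_le_mul_of_nonneg_left h' hp]
    linarith [ih hk]

theorem poisson_tail_lower_bound (lambda : ℝ) (hlambda : 100 ≤ lambda) (s : ℕ) (hs : 1 ≤ s) :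
    Real.exp (-(s : ℝ)) ≤
      Real.exp (-lambda) *
        ∑' i : ℕ, if Nat.sqrt s ≤ i then lambda ^ i / (Nat.factorial i : ℝ) else 0 := by
  set k := Nat.sqrt s with hkdef
  have hk1 : 1 ≤ k := Nat.sqrt_pos.mpr hs
  have hk1' : (1 : ℝ) ≤ (k : ℝ) := by exact_mod_cast hk1
  have hks : (k : ℝ) * (k : ℝ) ≤ (s : ℝ) := by
    have := Nat.sqrt_le' s
    have : k * k ≤ s := by rw [← pow_two]; exact this
    exact_mod_cast this
  have h0 : (0 : ℝ) ≤ lambda := by linarith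
  have hsumg : Summable (fun i : ℕ => lambda ^ i / (Nat.factorial i : ℝ)) :=
    Real.summable_pow_div_factorial lambda
  set f : ℕ → ℝ := fun i => if k ≤ i then lambda ^ i / (Nat.factorial i : ℝ) else 0 with hf
  have hfnn : ∀ i, 0 ≤ f i := by
    intro i
    simp only [hf]
    split <;> positivity
  have hsumf : Summable f := by
    refine hsumg.of_nonneg_of_le hfnn ?_
    intro i
    simp only [hf]
    split
    · exact le_rfl
    · positivity
  have hterm : lambda ^ k / (Nat.factorial k : ℝ) ≤ ∑' i, f i := by
    have := Summable.le_tsum hsumf k (fun j _ => hfnn j)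
    simpa [hf] using this
  rcases le_or_gt lambda (2 * (k : ℝ)) with hB | hA
  · -- Case B: lambda ≤ 2k; use the single term λ^k/k!.
    have hk50 : (50 : ℝ) ≤ (k : ℝ) := by linarith
    have hkpos : (0 : ℝ) < (k : ℝ) := by linarith
    -- exp(k-2) ≥ k - 1 ≥ k/100, so exp(2-k) ≤ 100/k
    have hexp1 : Real.exp (2 - (k : ℝ)) ≤ 100 / (k : ℝ) := by
      have h1 : (k : ℝ) - 1 ≤ Real.exp ((k : ℝ) - 2) := by
        have := Real.add_one_le_exp ((k : ℝ) - 2)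
        linarith
      have h2 : (k : ℝ) ≤ 100 * Real.exp ((k : ℝ) - 2) := by nlinarith
      rw [le_div_iff₀ hkpos]
      have h3 : Real.exp (2 - (k : ℝ)) * Real.exp ((k : ℝ) - 2) = 1 := by
        rw [← Real.exp_add]; norm_num
      have h4 : 0 ≤ Real.exp (2 - (k : ℝ)) := (Real.exp_pos _).le
      nlinarith [mul_le_mul_of_nonneg_left h2 h4]
    -- exp(λ - s) ≤ (exp(2-k))^k ≤ (100/k)^k ≤ λ^k/k!
    have hstep1 : Real.exp (lambda - (s : ℝ)) ≤ Real.exp (2 - (k : ℝ)) ^ k := by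
      rw [← Real.exp_nat_mul]
      apply Real.exp_le_exp.mpr
      nlinarith
    have hstep2 : Real.exp (2 - (k : ℝ)) ^ k ≤ (100 / (k : ℝ)) ^ k :=
      pow_le_pow_left₀ (Real.exp_pos _).le hexp1 k
    have hstep3 : (100 / (k : ℝ)) ^ k ≤ lambda ^ k / (Nat.factorial k : ℝ) := by
      rw [div_pow]
      have hfk : (Nat.factorial k : ℝ) ≤ (k : ℝ) ^ k := by
        exact_mod_cast Nat.factorial_le_pow k
      have hfkpos : (0 : ℝ) < (Nat.factorial k : ℝ) := by
        exact_mod_cast Nat.factorial_pos k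
      calc (100 : ℝ) ^ k / (k : ℝ) ^ k ≤ (100 : ℝ) ^ k / (Nat.factorial k : ℝ) :=
            div_le_div_of_nonneg_left (by positivity) hfkpos hfk
        _ ≤ lambda ^ k / (Nat.factorial k : ℝ) := by
            gcongr
    have key : Real.exp (lambda - (s : ℝ)) ≤ ∑' i, f i :=
      le_trans (le_trans hstep1 (le_trans hstep2 hstep3)) hterm
    calc Real.exp (-(s : ℝ)) = Real.exp (-lambda) * Real.exp (lambda - (s : ℝ)) := by
          rw [← Real.exp_add]; ring_nf
      _ ≤ Real.exp (-lambda) * ∑' i, f i :=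
          mul_le_mul_of_nonneg_left key (Real.exp_pos _).le
  · -- Case A: lambda > 2k; the tail carries at least half the mass.
    set H : ℝ := ∑ i ∈ Finset.range k, lambda ^ i / (Nat.factorial i : ℝ) with hH
    have hhead : H ≤ lambda ^ k / (Nat.factorial k : ℝ) :=
      poisson_head_le_term lambda k hA.le
    -- full sum identity
    have hfull : Real.exp lambda = (∑' i, f i) + H := by
      have hexp : Real.exp lambda = ∑' i : ℕ, lambda ^ i / (Nat.factorial i : ℝ) := by
        rw [Real.exp_eq_exp_ℝ, NormedSpace.exp_eq_tsum_div]
      set g : ℕ → ℝ := fun i => if i < k then lambda ^ i / (Nat.factorial i : ℝ) else 0 with hg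
      have hsumgg : Summable g := by
        apply summable_of_ne_finset_zero (s := Finset.range k)
        intro i hi
        simp only [hg, if_neg (Nat.not_lt.mpr (by simpa using hi))]
      have hgsum : ∑' i, g i = H := by
        rw [tsum_eq_sum (s := Finset.range k) (by
          intro i hi
          simp only [hg, if_neg (Nat.not_lt.mpr (by simpa using hi))])]
        apply Finset.sum_congr rfl
        intro i hi
        simp only [hg, if_pos (Finset.mem_range.mp hi)]
      have hpt : ∀ i : ℕ, lambda ^ i / (Nat.factorial i : ℝ) = f i + g i := by
        intro i
        by_cases h : k ≤ i
        · simp [hf, hg, h, Nat.not_lt.mpr h]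
        · simp [hf, hg, h, Nat.lt_of_not_le h]
      rw [hexp, tsum_congr hpt, Summable.tsum_add hsumf hsumgg, hgsum]
    -- λ^k/k! ≤ exp λ / 2
    have hhalf : lambda ^ k / (Nat.factorial k : ℝ) ≤ Real.exp lambda / 2 := by
      have hpart := Real.sum_le_exp_of_nonneg h0 (k + 2)
      rw [Finset.sum_range_succ, Finset.sum_range_succ] at hpart
      have hrange : (0 : ℝ) ≤ ∑ i ∈ Finset.range k, lambda ^ i / (Nat.factorial i : ℝ) := by
        apply Finset.sum_nonneg
        intro i _
        positivity
      have hk1fact : ((Nat.factorial (k + 1) : ℝ)) = ((k : ℝ) + 1) * (Nat.factorial k : ℝ) := by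
        push_cast [Nat.factorial_succ]; ring
      have hmono : lambda ^ k / (Nat.factorial k : ℝ) ≤
          lambda ^ (k + 1) / (Nat.factorial (k + 1) : ℝ) := by
        rw [pow_succ, hk1fact, div_le_div_iff₀ (by positivity) (by positivity)]
        have hp : (0 : ℝ) ≤ lambda ^ k := pow_nonneg h0 k
        nlinarith [mul_le_mul_of_nonneg_left (show (k : ℝ) + 1 ≤ lambda by linarith) hp]
      linarith
    have hT : Real.exp lambda / 2 ≤ ∑' i, f i := by
      have hHnn : 0 ≤ H := by
        apply Finset.sum_nonneg
        intro i _
        positivity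
      linarith
    have he2 : (2 : ℝ) ≤ Real.exp 1 := by
      have := Real.add_one_le_exp 1
      linarith
    calc Real.exp (-(s : ℝ)) ≤ Real.exp (-1) := by
          apply Real.exp_le_exp.mpr
          have : (1 : ℝ) ≤ (s : ℝ) := by exact_mod_cast hs
          linarith
      _ ≤ 1 / 2 := by
          rw [Real.exp_neg]
          rw [inv_le_iff_one_le_mul₀ (Real.exp_pos 1)] at *
          · nlinarith [Real.exp_pos 1]
      _ = Real.exp (-lambda) * (Real.exp lambda / 2) := by
          rw [Real.exp_neg]
          field_simp
      _ ≤ Real.exp (-lambda) * ∑' i, f i :=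
          mul_le_mul_of_nonneg_left hT (Real.exp_pos _).le
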